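/- arXiv:1504.06303 — 7 statements merged into one kernel-verified Lean document; each statement's English description precedes it below -/
import Mathlib

section
/- Let g be a real Lie algebra and let R be an ℝ-linear endomorphism of g satisfying mCYBE(−1), i.e. [RX,RY] − R([X,Y]_R) = [X,Y] for all X,Y ∈ g. Then the ℝ-linear map R⁻ : g → g^ℂ defined by R⁻(X) := (RX) ⊗ 1 − X ⊗ i is injective and satisfies R⁻([X,Y]_R) = [R⁻(X), R⁻(Y)] for all X,Y ∈ g; i.e. R⁻ is an injective homomorphism of real Lie algebras from g_R into g^ℂ. -/
open TensorProduct

/-- If `R` satisfies mCYBE(−1), then `R⁻ : X ↦ (R X) ⊗ 1 − X ⊗ i`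
(written `1 ⊗ₜ R X − i ⊗ₜ X` in `ℂ ⊗[ℝ] g`) is an injective homomorphism of real
Lie algebras from `g_R` into the complexification `g^ℂ`. -/
theorem stmt3 (g : Type*) [LieRing g] [LieAlgebra ℝ g] (R : g →ₗ[ℝ] g)
    (hR : ∀ X Y : g, ⁅R X, R Y⁆ - R (⁅R X, Y⁆ + ⁅X, R Y⁆) = ⁅X, Y⁆) :
    Function.Injective
      (fun X : g => (1 : ℂ) ⊗ₜ[ℝ] (R X) - Complex.I ⊗ₜ[ℝ] X) ∧
    ∀ X Y : g,
      (1 : ℂ) ⊗ₜ[ℝ] (R (⁅R X, Y⁆ + ⁅X, R Y⁆)) - Complex.I ⊗ₜ[ℝ] (⁅R X, Y⁆ + ⁅X, R Y⁆)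
        = ⁅(1 : ℂ) ⊗ₜ[ℝ] (R X) - Complex.I ⊗ₜ[ℝ] X,
           (1 : ℂ) ⊗ₜ[ℝ] (R Y) - Complex.I ⊗ₜ[ℝ] Y⁆ := by
  constructor
  · -- injectivity
    intro X Y h
    simp only at h
    -- apply the imaginary-part map tensored with id
    have him : ∀ Z : g,
        (TensorProduct.lid ℝ g) ((Complex.imLm.rTensor g)
          ((1 : ℂ) ⊗ₜ[ℝ] (R Z) - Complex.I ⊗ₜ[ℝ] Z)) = -Z := by
      intro Z
      simp [LinearMap.rTensor_tmul, Complex.imLm]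
    have := congrArg (fun t => (TensorProduct.lid ℝ g) ((Complex.imLm.rTensor g) t)) h
    simp only [him] at this
    exact neg_injective this
  · intro X Y
    have expand : ⁅(1 : ℂ) ⊗ₜ[ℝ] (R X) - Complex.I ⊗ₜ[ℝ] X,
           (1 : ℂ) ⊗ₜ[ℝ] (R Y) - Complex.I ⊗ₜ[ℝ] Y⁆
        = (1 : ℂ) ⊗ₜ[ℝ] ⁅R X, R Y⁆ - Complex.I ⊗ₜ[ℝ] ⁅R X, Y⁆
          - Complex.I ⊗ₜ[ℝ] ⁅X, R Y⁆ + (Complex.I * Complex.I) ⊗ₜ[ℝ] ⁅X, Y⁆ := by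
      simp only [lie_sub, sub_lie, LieAlgebra.ExtendScalars.bracket_tmul, one_mul, mul_one]
      ring_nf
      abel
    rw [expand, Complex.I_mul_I]
    have h1 : ((-1 : ℂ)) ⊗ₜ[ℝ] ⁅X, Y⁆ = -((1 : ℂ) ⊗ₜ[ℝ] ⁅X, Y⁆) := by
      rw [← neg_tmul]
    rw [h1, ← hR X Y]
    have h2 : (1 : ℂ) ⊗ₜ[ℝ] (⁅R X, R Y⁆ - R (⁅R X, Y⁆ + ⁅X, R Y⁆))
        = (1 : ℂ) ⊗ₜ[ℝ] ⁅R X, R Y⁆ - (1 : ℂ) ⊗ₜ[ℝ] (R (⁅R X, Y⁆ + ⁅X, R Y⁆)) := by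
      rw [tmul_sub]
    rw [h2]
    have h3 : Complex.I ⊗ₜ[ℝ] (⁅R X, Y⁆ + ⁅X, R Y⁆)
        = Complex.I ⊗ₜ[ℝ] ⁅R X, Y⁆ + Complex.I ⊗ₜ[ℝ] ⁅X, R Y⁆ := tmul_add _ _ _
    rw [h3]
    abel
end

section
/- Let g be a real Lie algebra and let p ⊆ g^ℂ be a real Lie subalgebra such that g^ℂ = (g ⊗ 1) ∔ p as an internal direct sum of real subspaces. Then: (i) for every X ∈ g there exists a unique A_X ∈ p such that X ⊗ 1 = (i/2)(A_X − τ(A_X)); (ii) for each X ∈ g the element (1/2)(A_X + τ(A_X)) is fixed by τ and hence equals (R_p X) ⊗ 1 for a unique R_p X ∈ g; (iii) the resulting ℝ-linear operator R_p satisfies mCYBE(−1): [R_p X, R_p Y] − R_p([R_p X, Y] + [X, R_p Y]) = [X,Y] for all X,Y ∈ g. -/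
open TensorProduct

/-- The conjugation `τ : g^ℂ → g^ℂ`, determined by `τ(u ⊗ X) = ū ⊗ X`,
realised on the complexification `ℂ ⊗[ℝ] g`. -/
noncomputable def conjMap (g : Type*) [AddCommGroup g] [Module ℝ g] :
    ℂ ⊗[ℝ] g →ₗ[ℝ] ℂ ⊗[ℝ] g :=
  LinearMap.rTensor g Complex.conjAe.toLinearMap

section Aux

variable {g : Type*} [AddCommGroup g] [Module ℝ g]

lemma conjMap_tmul (c : ℂ) (X : g) :
    conjMap g (c ⊗ₜ[ℝ] X) = (starRingEnd ℂ c) ⊗ₜ[ℝ] X := rfl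

lemma conjMap_conjMap (v : ℂ ⊗[ℝ] g) : conjMap g (conjMap g v) = v := by
  induction v using TensorProduct.induction_on with
  | zero => simp
  | tmul c X => simp [conjMap_tmul]
  | add x y hx hy => rw [map_add, map_add, hx, hy]

lemma conjMap_smul (c : ℂ) (v : ℂ ⊗[ℝ] g) :
    conjMap g (c • v) = (starRingEnd ℂ c) • conjMap g v := by
  induction v using TensorProduct.induction_on with
  | zero => simp
  | tmul d X => rw [smul_tmul', conjMap_tmul, conjMap_tmul, smul_tmul']; simp
  | add x y hx hy => rw [smul_add, map_add, hx, hy, map_add, smul_add]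

/-- The "real part" retraction `ℂ ⊗[ℝ] g → g`. -/
noncomputable def reMap (g : Type*) [AddCommGroup g] [Module ℝ g] :
    ℂ ⊗[ℝ] g →ₗ[ℝ] g :=
  (TensorProduct.lid ℝ g).toLinearMap ∘ₗ LinearMap.rTensor g Complex.reLm

lemma reMap_tmul (c : ℂ) (X : g) : reMap g (c ⊗ₜ[ℝ] X) = c.re • X := rfl

lemma one_tmul_injective {X Y : g} (h : (1 : ℂ) ⊗ₜ[ℝ] X = (1 : ℂ) ⊗ₜ[ℝ] Y) :
    X = Y := by
  have := congrArg (reMap g) h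
  simpa [reMap_tmul] using this

lemma half_mem (v : ℂ ⊗[ℝ] g) :
    (1 / 2 : ℂ) • (v + conjMap g v) ∈
      LinearMap.range (TensorProduct.mk ℝ ℂ g 1) := by
  induction v using TensorProduct.induction_on with
  | zero => simp
  | tmul c X =>
    refine ⟨c.re • X, ?_⟩
    have h1 : (1 / 2 : ℂ) * (c + starRingEnd ℂ c) = (c.re : ℂ) := by
      rw [Complex.add_conj]; push_cast; ring
    rw [TensorProduct.mk_apply, conjMap_tmul, ← TensorProduct.add_tmul,
      smul_tmul', smul_eq_mul, h1, TensorProduct.tmul_smul, smul_tmul',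
      Complex.real_smul, mul_one]
  | add x y hx hy =>
    have : (1 / 2 : ℂ) • (x + y + conjMap g (x + y)) =
        (1 / 2 : ℂ) • (x + conjMap g x) + (1 / 2 : ℂ) • (y + conjMap g y) := by
      rw [map_add]; module
    rw [this]
    exact Submodule.add_mem _ hx hy

lemma fixed_mem {v : ℂ ⊗[ℝ] g} (hv : conjMap g v = v) :
    v ∈ LinearMap.range (TensorProduct.mk ℝ ℂ g 1) := by
  have h := half_mem v
  rw [hv] at h
  have h2 : (1 / 2 : ℂ) • (v + v) = v := by module
  rwa [h2] at h

lemma conjMap_one_tmul (X : g) :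
    conjMap g ((1 : ℂ) ⊗ₜ[ℝ] X) = (1 : ℂ) ⊗ₜ[ℝ] X := by
  rw [conjMap_tmul]; simp

end Aux

/-- Let `p ⊆ g^ℂ` be a real Lie subalgebra complementary to `g ⊗ 1`.
Then (i) every `X ∈ g` satisfies `X ⊗ 1 = (i/2)(A − τ A)` for a unique `A = A_X ∈ p`;
(ii) for each such `X` and `A_X`, the element `(1/2)(A_X + τ A_X)` is `τ`-fixed and equals
`Z ⊗ 1` for a unique `Z = R_p X ∈ g`; (iii) the resulting operator `R_p` satisfies
mCYBE(−1): `[R_p X, R_p Y] − R_p([R_p X,Y] + [X,R_p Y]) = [X,Y]`. -/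
theorem stmt5 (g : Type*) [LieRing g] [LieAlgebra ℝ g]
    (p : Submodule ℝ (ℂ ⊗[ℝ] g))
    (hsub : ∀ x ∈ p, ∀ y ∈ p, ⁅x, y⁆ ∈ p)
    (hcompl : IsCompl (LinearMap.range (TensorProduct.mk ℝ ℂ g 1)) p) :
    (∀ X : g, ∃! A : ℂ ⊗[ℝ] g, A ∈ p ∧
        (1 : ℂ) ⊗ₜ[ℝ] X = (Complex.I / 2) • (A - conjMap g A)) ∧
    (∀ (X : g) (A : ℂ ⊗[ℝ] g), A ∈ p →
        (1 : ℂ) ⊗ₜ[ℝ] X = (Complex.I / 2) • (A - conjMap g A) →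
        conjMap g ((1 / 2 : ℂ) • (A + conjMap g A)) = (1 / 2 : ℂ) • (A + conjMap g A) ∧
        ∃! Z : g, (1 / 2 : ℂ) • (A + conjMap g A) = (1 : ℂ) ⊗ₜ[ℝ] Z) ∧
    (∀ Rp : g → g,
      (∀ (X : g) (A : ℂ ⊗[ℝ] g), A ∈ p →
          (1 : ℂ) ⊗ₜ[ℝ] X = (Complex.I / 2) • (A - conjMap g A) →
          (1 : ℂ) ⊗ₜ[ℝ] (Rp X) = (1 / 2 : ℂ) • (A + conjMap g A)) →
      ∀ X Y : g,
        ⁅Rp X, Rp Y⁆ - Rp (⁅Rp X, Y⁆ + ⁅X, Rp Y⁆) = ⁅X, Y⁆) := by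
  -- Existence part of (i), used twice.
  have hex : ∀ X : g, ∃ A ∈ p,
      (1 : ℂ) ⊗ₜ[ℝ] X = (Complex.I / 2) • (A - conjMap g A) := by
    intro X
    -- decompose `(-i) ⊗ X` along the complement
    have htop : (-Complex.I) ⊗ₜ[ℝ] X ∈
        LinearMap.range (TensorProduct.mk ℝ ℂ g 1) ⊔ p := by
      rw [hcompl.codisjoint.eq_top]; trivial
    obtain ⟨w, hw, A, hA, hsum⟩ := Submodule.mem_sup.1 htop
    refine ⟨A, hA, ?_⟩
    obtain ⟨W, hW⟩ := hw
    have hτw : conjMap g w = w := by rw [← hW]; exact conjMap_one_tmul W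
    have hAeq : A = (-Complex.I) ⊗ₜ[ℝ] X - w := by
      rw [← hsum]; abel
    have hτA : conjMap g A = Complex.I ⊗ₜ[ℝ] X - w := by
      rw [hAeq, map_sub, hτw, conjMap_tmul]
      simp
    rw [hτA, hAeq]
    have : (-Complex.I) ⊗ₜ[ℝ] X - w - (Complex.I ⊗ₜ[ℝ] X - w) =
        (-Complex.I - Complex.I) ⊗ₜ[ℝ] X := by
      rw [TensorProduct.sub_tmul]; abel
    rw [this, smul_tmul', smul_eq_mul]
    have : Complex.I / 2 * (-Complex.I - Complex.I) = 1 := by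
      have := Complex.I_mul_I
      ring_nf
      rw [Complex.I_sq]
      ring
    rw [this]
  -- injectivity-type fact: a τ-fixed element of p is zero
  have hfix_zero : ∀ d ∈ p, conjMap g d = d → d = 0 := by
    intro d hd hτd
    have h1 : d ∈ LinearMap.range (TensorProduct.mk ℝ ℂ g 1) := fixed_mem hτd
    exact (Submodule.disjoint_def.1 hcompl.disjoint) d h1 hd
  -- uniqueness part of (i)
  have huniq : ∀ (X : g) (A A' : ℂ ⊗[ℝ] g), A ∈ p → A' ∈ p →
      (1 : ℂ) ⊗ₜ[ℝ] X = (Complex.I / 2) • (A - conjMap g A) →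
      (1 : ℂ) ⊗ₜ[ℝ] X = (Complex.I / 2) • (A' - conjMap g A') → A' = A := by
    intro X A A' hA hA' h1 h2
    have h3 : (Complex.I / 2) • (A - conjMap g A) =
        (Complex.I / 2) • (A' - conjMap g A') := by rw [← h1, ← h2]
    have h4 : A - conjMap g A = A' - conjMap g A' := by
      have := congrArg (fun v => (-(2 : ℂ) * Complex.I) • v) h3
      simp only [smul_smul] at this
      have hc : -(2 : ℂ) * Complex.I * (Complex.I / 2) = 1 := by
        have := Complex.I_mul_I
        ring_nf
        rw [Complex.I_sq]; ring
      rwa [hc, one_smul, one_smul] at this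
    have h5 : conjMap g (A' - A) = A' - A := by
      rw [map_sub]
      have : conjMap g A' - conjMap g A = A' - A := by
        have := h4
        have h6 : A - A' = conjMap g A - conjMap g A' := by
          rw [sub_eq_sub_iff_sub_eq_sub] at h4
          exact h4
        rw [← neg_sub A A', h6]; abel
      exact this
    exact sub_eq_zero.1 (hfix_zero (A' - A) (Submodule.sub_mem p hA' hA) h5)
  refine ⟨?_, ?_, ?_⟩
  · -- (i)
    intro X
    obtain ⟨A, hA, hrel⟩ := hex X
    exact ⟨A, ⟨hA, hrel⟩, fun A' ⟨hA', hrel'⟩ => huniq X A A' hA hA' hrel hrel'⟩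
  · -- (ii)
    intro X A hA hrel
    have hfixed : conjMap g ((1 / 2 : ℂ) • (A + conjMap g A)) =
        (1 / 2 : ℂ) • (A + conjMap g A) := by
      rw [conjMap_smul, map_add, conjMap_conjMap, map_div₀, map_one,
        Complex.conj_ofNat, add_comm]
    refine ⟨hfixed, ?_⟩
    obtain ⟨Z, hZ⟩ := fixed_mem hfixed
    rw [TensorProduct.mk_apply] at hZ
    exact ⟨Z, hZ.symm, fun Z' hZ' => one_tmul_injective (hZ'.symm.trans hZ.symm)⟩
  · -- (iii)
    intro Rp hRp X Y
    obtain ⟨A, hA, hAX⟩ := hex X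
    obtain ⟨B, hB, hBY⟩ := hex Y
    have hRX := hRp X A hA hAX
    have hRY := hRp Y B hB hBY
    -- A = 1 ⊗ Rp X + (-i) ⊗ X, and similarly for B
    have key : ∀ (W : g) (C : ℂ ⊗[ℝ] g),
        (1 : ℂ) ⊗ₜ[ℝ] W = (Complex.I / 2) • (C - conjMap g C) →
        (1 : ℂ) ⊗ₜ[ℝ] (Rp W) = (1 / 2 : ℂ) • (C + conjMap g C) →
        C = (1 : ℂ) ⊗ₜ[ℝ] (Rp W) + (-Complex.I) ⊗ₜ[ℝ] W := by
      intro W C h1 h2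
      have h3 : (1 / 2 : ℂ) • (C - conjMap g C) = (-Complex.I) ⊗ₜ[ℝ] W := by
        have := congrArg (fun v => (-Complex.I) • v) h1
        simp only [smul_smul] at this
        have hc : -Complex.I * (Complex.I / 2) = 1 / 2 := by
          ring_nf; rw [Complex.I_sq]; ring
        rw [hc] at this
        rw [← this, smul_tmul', smul_eq_mul, mul_one]
      have h4 : (1 / 2 : ℂ) • (C + conjMap g C) + (1 / 2 : ℂ) • (C - conjMap g C)
          = C := by module
      rw [← h2, h3] at h4
      exact h4.symm
    have hAform := key X A hAX hRX
    have hBform := key Y B hBY hRY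
    -- compute the bracket
    set u : g := ⁅Rp X, Rp Y⁆ - ⁅X, Y⁆ with hu
    set v : g := ⁅Rp X, Y⁆ + ⁅X, Rp Y⁆ with hv
    have hCp : ⁅A, B⁆ ∈ p := hsub A hA B hB
    have hCform : ⁅A, B⁆ = (1 : ℂ) ⊗ₜ[ℝ] u + (-Complex.I) ⊗ₜ[ℝ] v := by
      rw [hAform, hBform]
      simp only [lie_add, add_lie, LieAlgebra.ExtendScalars.bracket_tmul]
      have h1 : -Complex.I * -Complex.I = -1 := by
        ring_nf; rw [Complex.I_sq]
      have h2 : (1 : ℂ) * -Complex.I = -Complex.I := one_mul _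
      have h3 : -Complex.I * (1 : ℂ) = -Complex.I := mul_one _
      rw [h1, h2, h3, one_mul, hu, hv]
      rw [TensorProduct.tmul_sub, TensorProduct.tmul_add]
      have h4 : (-1 : ℂ) ⊗ₜ[ℝ] ⁅X, Y⁆ = -((1 : ℂ) ⊗ₜ[ℝ] ⁅X, Y⁆) := by
        rw [← TensorProduct.neg_tmul]
      rw [h4]
      abel
    have hτC : conjMap g ⁅A, B⁆ = (1 : ℂ) ⊗ₜ[ℝ] u + Complex.I ⊗ₜ[ℝ] v := by
      rw [hCform, map_add, conjMap_tmul, conjMap_tmul]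
      simp
    have hrelv : (1 : ℂ) ⊗ₜ[ℝ] v = (Complex.I / 2) • (⁅A, B⁆ - conjMap g ⁅A, B⁆) := by
      rw [hτC, hCform]
      have h5 : (1 : ℂ) ⊗ₜ[ℝ] u + (-Complex.I) ⊗ₜ[ℝ] v -
          ((1 : ℂ) ⊗ₜ[ℝ] u + Complex.I ⊗ₜ[ℝ] v) =
          (-Complex.I - Complex.I) ⊗ₜ[ℝ] v := by
        rw [TensorProduct.sub_tmul]; abel
      rw [h5, smul_tmul', smul_eq_mul]
      have h6 : Complex.I / 2 * (-Complex.I - Complex.I) = 1 := by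
        ring_nf; rw [Complex.I_sq]; ring
      rw [h6]
    have hRv := hRp v ⁅A, B⁆ hCp hrelv
    have hsumC : (1 / 2 : ℂ) • (⁅A, B⁆ + conjMap g ⁅A, B⁆) = (1 : ℂ) ⊗ₜ[ℝ] u := by
      rw [hτC, hCform]
      have h7 : (1 : ℂ) ⊗ₜ[ℝ] u + (-Complex.I) ⊗ₜ[ℝ] v +
          ((1 : ℂ) ⊗ₜ[ℝ] u + Complex.I ⊗ₜ[ℝ] v) =
          (2 : ℂ) ⊗ₜ[ℝ] u + (-Complex.I + Complex.I) ⊗ₜ[ℝ] v := by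
        have h2u : (2 : ℂ) ⊗ₜ[ℝ] u = (1 : ℂ) ⊗ₜ[ℝ] u + (1 : ℂ) ⊗ₜ[ℝ] u := by
          rw [← TensorProduct.add_tmul]; norm_num
        rw [TensorProduct.add_tmul, h2u]; abel
      rw [h7]
      simp only [neg_add_cancel, TensorProduct.zero_tmul, add_zero]
      rw [smul_tmul', smul_eq_mul]
      norm_num
    rw [hsumC] at hRv
    have hfin : Rp v = u := one_tmul_injective hRv
    rw [hfin, hu]
    abel
end

section
/- Let g be a real Lie algebra equipped with a symmetric invariant ℝ-bilinear form ⟨·,·⟩, extend it ℂ-bilinearly to g^ℂ, and set ⟨⟨x,y⟩⟩ := Im⟨x,y⟩ for x,y ∈ g^ℂ. Then for any ℝ-linear endomorphism R of g and all X, X' ∈ g, ⟨⟨(RX) ⊗ 1 − X ⊗ i, (RX') ⊗ 1 − X' ⊗ i⟩⟩ = −⟨RX, X'⟩ − ⟨X, RX'⟩. Consequently, the real subspace g_R = { (RX) ⊗ 1 − X ⊗ i : X ∈ g } of g^ℂ is isotropic with respect to ⟨⟨·,·⟩⟩ if and only if R is skew-symmetric with respect to ⟨·,·⟩ (i.e.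 ⟨RX,Y⟩ = −⟨X,RY⟩ for all X,Y). -/
open TensorProduct

/-- With `⟨⟨x,y⟩⟩ := Im ⟨x,y⟩` on `g^ℂ` (the ℂ-bilinear extension of a
symmetric invariant form `⟨·,·⟩` on `g`), one has
`⟨⟨(R X) ⊗ 1 − X ⊗ i, (R X') ⊗ 1 − X' ⊗ i⟩⟩ = −⟨R X, X'⟩ − ⟨X, R X'⟩`; hence the subspace
`g_R = { (R X) ⊗ 1 − X ⊗ i }` is isotropic iff `R` is skew-symmetric. -/
theorem stmt8 (g : Type*) [LieRing g] [LieAlgebra ℝ g]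
    (B : LinearMap.BilinForm ℝ g)
    (hsymm : ∀ X Y : g, B X Y = B Y X)
    (hinv : ∀ X Y Z : g, B ⁅X, Y⁆ Z = B X ⁅Y, Z⁆)
    (R : g →ₗ[ℝ] g) :
    (∀ X X' : g,
      ((B.baseChange ℂ) ((1 : ℂ) ⊗ₜ[ℝ] (R X) - Complex.I ⊗ₜ[ℝ] X)
          ((1 : ℂ) ⊗ₜ[ℝ] (R X') - Complex.I ⊗ₜ[ℝ] X')).im
        = -(B (R X) X') - B X (R X')) ∧
    ((∀ X X' : g,
        ((B.baseChange ℂ) ((1 : ℂ) ⊗ₜ[ℝ] (R X) - Complex.I ⊗ₜ[ℝ] X)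
            ((1 : ℂ) ⊗ₜ[ℝ] (R X') - Complex.I ⊗ₜ[ℝ] X')).im = 0) ↔
      (∀ X Y : g, B (R X) Y = -(B X (R Y)))) := by
  have key : ∀ X X' : g,
      ((B.baseChange ℂ) ((1 : ℂ) ⊗ₜ[ℝ] (R X) - Complex.I ⊗ₜ[ℝ] X)
          ((1 : ℂ) ⊗ₜ[ℝ] (R X') - Complex.I ⊗ₜ[ℝ] X')).im
        = -(B (R X) X') - B X (R X') := by
    intro X X'
    simp [LinearMap.BilinForm.baseChange_tmul, Complex.ext_iff, smul_sub, sub_smul,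
      Complex.smul_re, Complex.smul_im]
  refine ⟨key, ?_, ?_⟩
  · intro h X Y
    have := (key X Y).symm.trans (h X Y)
    linarith
  · intro h X X'
    rw [key X X', h X X']
    ring
end

section
/- Let g be a real Lie algebra and let R be an ℝ-linear endomorphism of g satisfying mCYBE(1), i.e. [RX,RY] − R([X,Y]_R) = −[X,Y] for all X,Y ∈ g. Then the map ι : g → d = g ⊕ g, ι(X) := (RX + X, RX − X), is injective and satisfies ι([X,Y]_R) = [ι(X), ι(Y)] for all X,Y ∈ g; i.e. ι is an injective homomorphism of real Lie algebras from g_R into the real double d. -/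
/-- The real double `d = g ⊕ g`: the product Lie ring with componentwise bracket. -/
instance prodLieRing (g : Type*) [LieRing g] : LieRing (g × g) where
  bracket x y := (⁅x.1, y.1⁆, ⁅x.2, y.2⁆)
  add_lie x y z := Prod.ext (add_lie x.1 y.1 z.1) (add_lie x.2 y.2 z.2)
  lie_add x y z := Prod.ext (lie_add x.1 y.1 z.1) (lie_add x.2 y.2 z.2)
  lie_self x := Prod.ext (lie_self x.1) (lie_self x.2)
  leibniz_lie x y z := Prod.ext (leibniz_lie x.1 y.1 z.1) (leibniz_lie x.2 y.2 z.2)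

/-- If `R` satisfies mCYBE(1), then `ι : X ↦ (R X + X, R X − X)` is an
injective homomorphism of real Lie algebras from `g_R` into the real double `d = g ⊕ g`. -/
theorem stmt10 (g : Type*) [LieRing g] [LieAlgebra ℝ g] (R : g →ₗ[ℝ] g)
    (hR : ∀ X Y : g, ⁅R X, R Y⁆ - R (⁅R X, Y⁆ + ⁅X, R Y⁆) = -⁅X, Y⁆) :
    Function.Injective (fun X : g => ((R X + X, R X - X) : g × g)) ∧
    ∀ X Y : g,
      ((R (⁅R X, Y⁆ + ⁅X, R Y⁆) + (⁅R X, Y⁆ + ⁅X, R Y⁆),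
        R (⁅R X, Y⁆ + ⁅X, R Y⁆) - (⁅R X, Y⁆ + ⁅X, R Y⁆)) : g × g)
      = ⁅((R X + X, R X - X) : g × g), ((R Y + Y, R Y - Y) : g × g)⁆ := by
  constructor
  · intro X Y h
    have h1 : R X + X = R Y + Y := congrArg Prod.fst h
    have h2 : R X - X = R Y - Y := congrArg Prod.snd h
    have h3 : (2:ℝ) • X = (2:ℝ) • Y := by
      have := congrArg₂ (· - ·) h1 h2
      simp only [two_smul]
      abel_nf at this ⊢
      linear_combination (norm := abel) this
    exact smul_right_injective g two_ne_zero h3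
  · intro X Y
    have key : ⁅R X, R Y⁆ = R (⁅R X, Y⁆ + ⁅X, R Y⁆) - ⁅X, Y⁆ := by
      have := hR X Y
      linear_combination (norm := abel) this
    refine Prod.ext ?_ ?_ <;>
      show _ = ⁅_, _⁆ <;>
      simp only [lie_add, add_lie, lie_sub, sub_lie, key] <;> abel
end

section
/- Let g be a real Lie algebra and let p ⊆ d = g ⊕ g be a Lie subalgebra such that d = g^δ ∔ p as an internal direct sum of subspaces. Then: (i) for every X ∈ g there exists a unique pair (A₊, A₋) ∈ p such that X = (1/2)(A₊ − A₋); (ii) defining R_p X := (1/2)(A₊ + A₋), the resulting ℝ-linear operator R_p on g satisfies mCYBE(1): [R_p X, R_p Y] − R_p([R_p X, Y] + [X, R_p Y]) = −[X,Y] for all X,Y ∈ g. -/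
section Complement

variable {K g : Type*} [Field K] [AddCommGroup g] [Module K g] {p : Submodule K (g × g)}

theorem mem_range_id_prod_id {x : g × g} :
    x ∈ LinearMap.range ((LinearMap.id : g →ₗ[K] g).prod LinearMap.id) ↔ x.1 = x.2 :=
  ⟨by rintro ⟨w, rfl⟩; rfl, fun h => ⟨x.1, Prod.ext rfl h⟩⟩

theorem eq_of_fst_sub_snd_eq
    (hp : Disjoint (LinearMap.range ((LinearMap.id : g →ₗ[K] g).prod LinearMap.id)) p)
    {A B : g × g} (hA : A ∈ p) (hB : B ∈ p) (h : A.1 - A.2 = B.1 - B.2) : A = B := by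
  have hdiag : A - B ∈ LinearMap.range ((LinearMap.id : g →ₗ[K] g).prod LinearMap.id) :=
    mem_range_id_prod_id.mpr (sub_eq_sub_iff_sub_eq_sub.mp h)
  exact sub_eq_zero.mp (Submodule.disjoint_def.mp hp _ hdiag (p.sub_mem hA hB))

variable [NeZero (2 : K)]

theorem exists_mem_eq_half_smul_fst_sub_snd
    (hp : Codisjoint (LinearMap.range ((LinearMap.id : g →ₗ[K] g).prod LinearMap.id)) p)
    (X : g) : ∃ A ∈ p, X = (1 / 2 : K) • (A.1 - A.2) := by
  obtain ⟨d, A, hd, hA, hdA⟩ := Submodule.codisjoint_iff_exists_add_eq.mp hp (X, -X)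
  have hd : d.1 = d.2 := mem_range_id_prod_id.mp hd
  have h1 : d.1 + A.1 = X := congrArg Prod.fst hdA
  have h2 : d.2 + A.2 = -X := congrArg Prod.snd hdA
  refine ⟨A, hA, ?_⟩
  have hA : A.1 - A.2 = (2 : K) • X :=
    calc A.1 - A.2 = (d.1 + A.1) - (d.2 + A.2) := by rw [hd]; abel
      _ = (2 : K) • X := by rw [h1, h2, two_smul, sub_neg_eq_add]
  rw [hA, smul_smul, one_div, inv_mul_cancel₀ two_ne_zero, one_smul]

theorem existsUnique_mem_eq_half_smul_fst_sub_snd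
    (hp : IsCompl (LinearMap.range ((LinearMap.id : g →ₗ[K] g).prod LinearMap.id)) p)
    (X : g) : ∃! A : g × g, A ∈ p ∧ X = (1 / 2 : K) • (A.1 - A.2) := by
  obtain ⟨A, hA, hX⟩ := exists_mem_eq_half_smul_fst_sub_snd hp.codisjoint X
  refine ⟨A, ⟨hA, hX⟩, fun B ⟨hB, hXB⟩ => eq_of_fst_sub_snd_eq hp.disjoint hB hA ?_⟩
  rw [hX, smul_right_inj (one_div_ne_zero two_ne_zero)] at hXB
  exact hXB.symm

end Complement

section Lie

variable {K g : Type*} [Field K] [NeZero (2 : K)] [LieRing g] [LieAlgebra K g]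

theorem half_smul_lie_fst_sub_snd (A B : g × g) :
    (1 / 2 : K) • (⁅A, B⁆.1 - ⁅A, B⁆.2) =
      ⁅(1 / 2 : K) • (A.1 + A.2), (1 / 2 : K) • (B.1 - B.2)⁆ +
        ⁅(1 / 2 : K) • (A.1 - A.2), (1 / 2 : K) • (B.1 + B.2)⁆ := by
  change (1 / 2 : K) • (⁅A.1, B.1⁆ - ⁅A.2, B.2⁆) = _
  simp only [lie_smul, smul_lie, add_lie, lie_add, sub_lie, lie_sub]
  match_scalars <;> field_simp <;> ring

theorem half_smul_lie_fst_add_snd (A B : g × g) :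
    (1 / 2 : K) • (⁅A, B⁆.1 + ⁅A, B⁆.2) =
      ⁅(1 / 2 : K) • (A.1 + A.2), (1 / 2 : K) • (B.1 + B.2)⁆ +
        ⁅(1 / 2 : K) • (A.1 - A.2), (1 / 2 : K) • (B.1 - B.2)⁆ := by
  change (1 / 2 : K) • (⁅A.1, B.1⁆ + ⁅A.2, B.2⁆) = _
  simp only [lie_smul, smul_lie, add_lie, lie_add, sub_lie, lie_sub]
  match_scalars <;> field_simp <;> ring

end Lie

/-- Let `p` be a Lie subalgebra of the real double `d = g ⊕ g`
complementary to the diagonal `g^δ`. Then (i) every `X ∈ g` is `(1/2)(A₊ − A₋)` for a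
unique `(A₊, A₋) ∈ p`, and (ii) the operator `R_p X := (1/2)(A₊ + A₋)` satisfies
mCYBE(1). -/
theorem stmt12 (g : Type*) [LieRing g] [LieAlgebra ℝ g]
    (p : Submodule ℝ (g × g))
    (hsub : ∀ x ∈ p, ∀ y ∈ p, ⁅x, y⁆ ∈ p)
    (hcompl : IsCompl
      (LinearMap.range ((LinearMap.id : g →ₗ[ℝ] g).prod (LinearMap.id : g →ₗ[ℝ] g))) p) :
    (∀ X : g, ∃! A : g × g, A ∈ p ∧ X = (1 / 2 : ℝ) • (A.1 - A.2)) ∧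
    (∀ Rp : g → g,
      (∀ (X : g) (A : g × g), A ∈ p → X = (1 / 2 : ℝ) • (A.1 - A.2) →
          Rp X = (1 / 2 : ℝ) • (A.1 + A.2)) →
      ∀ X Y : g,
        ⁅Rp X, Rp Y⁆ - Rp (⁅Rp X, Y⁆ + ⁅X, Rp Y⁆) = -⁅X, Y⁆) := by
  refine ⟨existsUnique_mem_eq_half_smul_fst_sub_snd hcompl, fun Rp hR X Y => ?_⟩
  obtain ⟨A, hA, hX⟩ := exists_mem_eq_half_smul_fst_sub_snd hcompl.codisjoint X
  obtain ⟨B, hB, hY⟩ := exists_mem_eq_half_smul_fst_sub_snd hcompl.codisjoint Y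
  have hRX : Rp X = (1 / 2 : ℝ) • (A.1 + A.2) := hR X A hA hX
  have hRY : Rp Y = (1 / 2 : ℝ) • (B.1 + B.2) := hR Y B hB hY
  have hRXY : Rp (⁅Rp X, Y⁆ + ⁅X, Rp Y⁆) = ⁅Rp X, Rp Y⁆ + ⁅X, Y⁆ := by
    have hsum : ⁅Rp X, Y⁆ + ⁅X, Rp Y⁆ = (1 / 2 : ℝ) • (⁅A, B⁆.1 - ⁅A, B⁆.2) := by
      rw [half_smul_lie_fst_sub_snd, hRX, hRY, hX, hY]
    rw [hR _ _ (hsub A hA B hB) hsum, half_smul_lie_fst_add_snd, hRX, hRY, hX, hY]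
  rw [hRXY]
  abel
end

section
/- Let g be a real Lie algebra equipped with a symmetric invariant ℝ-bilinear form ⟨·,·⟩, and let R be an ℝ-linear endomorphism of g which is skew-symmetric with respect to ⟨·,·⟩ and satisfies the classical Yang–Baxter equation [RX,RY] = R([RX,Y] + [X,RY]). Then for all X, Y, Z ∈ g, ⟨[X,Y]_R, RZ⟩ + ⟨[Y,Z]_R, RX⟩ + ⟨[Z,X]_R, RY⟩ = 0, where [X,Y]_R := [RX,Y] + [X,RY]. (This is the 2-cocycle property of the skew-symmetric pairing ω(RX, RY) := ⟨X, RY⟩ on the subalgebra im(R), making im(R) a quasi-Frobenius Lie algebra.) -/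
/-- For a skew-symmetric solution `R` of the CYBE on `g` equipped with a
symmetric invariant form, the 2-cocycle identity
`⟨[X,Y]_R, RZ⟩ + ⟨[Y,Z]_R, RX⟩ + ⟨[Z,X]_R, RY⟩ = 0` holds, where
`[X,Y]_R := ⁅R X, Y⁆ + ⁅X, R Y⁆`. -/
theorem stmt18 (g : Type*) [LieRing g] [LieAlgebra ℝ g]
    (B : LinearMap.BilinForm ℝ g)
    (hsymm : ∀ X Y : g, B X Y = B Y X)
    (hinv : ∀ X Y Z : g, B ⁅X, Y⁆ Z = B X ⁅Y, Z⁆)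
    (R : g →ₗ[ℝ] g)
    (hskew : ∀ X Y : g, B (R X) Y = -(B X (R Y)))
    (hR : ∀ X Y : g, ⁅R X, R Y⁆ = R (⁅R X, Y⁆ + ⁅X, R Y⁆)) :
    ∀ X Y Z : g,
      B (⁅R X, Y⁆ + ⁅X, R Y⁆) (R Z) + B (⁅R Y, Z⁆ + ⁅Y, R Z⁆) (R X)
        + B (⁅R Z, X⁆ + ⁅Z, R X⁆) (R Y) = 0 := by
  intro X Y Z
  -- each pair collapses to -B ⁅RA,RB⁆ C
  have pair : ∀ A C D : g,
      B (⁅R A, C⁆ + ⁅A, R C⁆) (R D) = -(B ⁅R A, R C⁆ D) := by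
    intro A C D
    have e1 : B ⁅R A, C⁆ (R D) = B (R A) ⁅C, R D⁆ := hinv _ _ _
    have e2 : B ⁅A, R C⁆ (R D) = B A ⁅R C, R D⁆ := hinv _ _ _
    have e3 : B A ⁅R C, R D⁆ = B A (R (⁅R C, D⁆ + ⁅C, R D⁆)) := by rw [hR]
    have e4 : B (R A) (⁅R C, D⁆ + ⁅C, R D⁆) = -(B A (R (⁅R C, D⁆ + ⁅C, R D⁆))) :=
      hskew _ _
    have e5 : B (R A) (⁅R C, D⁆ + ⁅C, R D⁆)
        = B (R A) ⁅R C, D⁆ + B (R A) ⁅C, R D⁆ := map_add _ _ _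
    have e6 : B ⁅R A, R C⁆ D = B (R A) ⁅R C, D⁆ := hinv _ _ _
    have e0 : B (⁅R A, C⁆ + ⁅A, R C⁆) (R D)
        = B ⁅R A, C⁆ (R D) + B ⁅A, R C⁆ (R D) := by
      rw [map_add, LinearMap.add_apply]
    linarith
  -- the T identity: B ⁅RA,RB⁆ C = -(B ⁅RC,RA⁆ B) - B ⁅RB,RC⁆ A
  have tfact : ∀ A C D : g,
      B ⁅R A, R C⁆ D = -(B ⁅R D, R A⁆ C) - B ⁅R C, R D⁆ A := by
    intro A C D
    have e1 : B ⁅R A, R C⁆ D = B D ⁅R A, R C⁆ := hsymm _ _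
    have e2 : B D ⁅R A, R C⁆ = B D (R (⁅R A, C⁆ + ⁅A, R C⁆)) := by rw [hR]
    have e3 : B (R D) (⁅R A, C⁆ + ⁅A, R C⁆)
        = -(B D (R (⁅R A, C⁆ + ⁅A, R C⁆))) := hskew _ _
    have e4 : B (R D) (⁅R A, C⁆ + ⁅A, R C⁆)
        = B (R D) ⁅R A, C⁆ + B (R D) ⁅A, R C⁆ := map_add _ _ _
    have e5 : B ⁅R D, R A⁆ C = B (R D) ⁅R A, C⁆ := hinv _ _ _
    have e6 : B (R D) ⁅A, R C⁆ = -(B (R D) ⁅R C, A⁆) := by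
      rw [← lie_skew A (R C), map_neg]
    have e7 : B ⁅R D, R C⁆ A = B (R D) ⁅R C, A⁆ := hinv _ _ _
    have e8 : B ⁅R C, R D⁆ A = -(B ⁅R D, R C⁆ A) := by
      rw [← lie_skew (R D) (R C), map_neg, LinearMap.neg_apply]; ring
    linarith
  have p1 := pair X Y Z
  have p2 := pair Y Z X
  have p3 := pair Z X Y
  have t1 := tfact X Y Z
  have t2 := tfact Y Z X
  have t3 := tfact Z X Y
  linarith
end

section
/- Let L be a complex Lie algebra, regarded also as a real vector space, and let τ : L → L be an antilinear involution: an ℝ-linear map with τ∘τ = id, τ(i·x) = −i·τ(x), and τ([x,y]) = [τ(x), τ(y)]. Let g := { x ∈ L : τ(x) = x } be the corresponding real form. Suppose n and h are complex subspaces of L with τ(h) = h and such that L = n ∔ h ∔ τ(n) is an internal direct sum of complex subspaces, and set a := { x ∈ h : τ(x) = −x }. Then L = g ∔ a ∔ n as an internal direct sum of real subspaces. -/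
/-- Let `L` be a complex Lie algebra with an antilinear involution `τ`
(an ℝ-linear Lie algebra map with `τ∘τ = id` and `τ(i·x) = −i·τ(x)`), let
`g = { x : τ x = x }` be the corresponding real form, and suppose `n, h` are complex
subspaces with `τ(h) = h` and `L = n ∔ h ∔ τ(n)` an internal direct sum of complex
subspaces. Set `a := { x ∈ h : τ x = −x }`. Then `L = g ∔ a ∔ n` as an internal direct
sum of real subspaces. -/
theorem stmt19 (L : Type*) [LieRing L] [LieAlgebra ℂ L]
    [Module ℝ L] [IsScalarTower ℝ ℂ L]
    (τ : L →ₗ[ℝ] L)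
    (hτinv : ∀ x : L, τ (τ x) = x)
    (hτi : ∀ x : L, τ ((Complex.I : ℂ) • x) = (-(Complex.I : ℂ)) • τ x)
    (hτbr : ∀ x y : L, τ ⁅x, y⁆ = ⁅τ x, τ y⁆)
    (n h : Submodule ℂ L)
    (hτh : τ '' (h : Set L) = (h : Set L))
    (hdecomp : ∀ x : L, ∃! t : n × h × n,
        x = (t.1 : L) + (t.2.1 : L) + τ (t.2.2 : L)) :
    (∀ x : L, ∃ u v w : L,
        τ u = u ∧ v ∈ h ∧ τ v = -v ∧ w ∈ n ∧ x = u + v + w) ∧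
    (∀ u v w u' v' w' : L,
        τ u = u → v ∈ h → τ v = -v → w ∈ n →
        τ u' = u' → v' ∈ h → τ v' = -v' → w' ∈ n →
        u + v + w = u' + v' + w' → u = u' ∧ v = v' ∧ w = w') := by
  constructor
  · -- existence
    intro x
    obtain ⟨⟨n₁, h₁, n₂⟩, hx, -⟩ := hdecomp x
    simp only at hx
    have hτh₁ : τ (h₁ : L) ∈ h := by
      show τ (h₁ : L) ∈ (h : Set L)
      rw [← hτh]; exact ⟨h₁, h₁.2, rfl⟩
    refine ⟨(n₂ : L) + (2⁻¹ : ℝ) • ((h₁ : L) + τ h₁) + τ (n₂ : L),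
      (2⁻¹ : ℝ) • ((h₁ : L) - τ h₁), (n₁ : L) - n₂, ?_, ?_, ?_, ?_, ?_⟩
    · simp only [map_add, map_smul, hτinv]
      module
    · exact Submodule.smul_of_tower_mem h _ (Submodule.sub_mem h h₁.2 hτh₁)
    · simp only [map_smul, map_sub, hτinv]
      module
    · exact Submodule.sub_mem n n₁.2 n₂.2
    · rw [hx]; module
  · -- uniqueness
    have aux : ∀ U V W : L, τ U = U → V ∈ h → τ V = -V → W ∈ n →
        U + V + W = 0 → U = 0 ∧ V = 0 ∧ W = 0 := by
      intro U V W hU hVh hV hW hsum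
      have hτsum : U + -V + τ W = 0 := by
        have := congrArg τ hsum
        simpa [map_add, hU, hV] using this
      have hτW : τ W = V + V + W := by
        have hU' : U = -(V + W) := by linear_combination (norm := abel) hsum
        rw [hU'] at hτsum
        linear_combination (norm := abel) hτsum
      have hτVh : τ V ∈ h := by
        show τ V ∈ (h : Set L)
        rw [← hτh]; exact ⟨V, hVh, rfl⟩
      have hnVh : -V ∈ h := by rw [← hV]; exact hτVh
      obtain ⟨t, -, huniq⟩ := hdecomp (W + V)
      have e1 : t = (⟨W, hW⟩, ⟨V, hVh⟩, (0 : n)) := by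
        refine (huniq _ ?_).symm
        simp
      have e2 : t = ((0 : n), ⟨-V, hnVh⟩, ⟨W, hW⟩) := by
        refine (huniq _ ?_).symm
        simp only [Submodule.coe_zero, hτW]
        abel
      have eq12 := e1.symm.trans e2
      have hW0 : W = 0 := by
        have := congrArg (fun t : n × h × n => (t.1 : L)) eq12
        simpa using this
      have hVnV : V = -V := by
        have := congrArg (fun t : n × h × n => (t.2.1 : L)) eq12
        simpa using this
      have hV0 : V = 0 := by
        have h2 : (2 : ℝ) • V = 0 := by
          rw [two_smul]
          linear_combination (norm := abel) hVnV
        rcases smul_eq_zero.mp h2 with h' | h'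
        · norm_num at h'
        · exact h'
      refine ⟨?_, hV0, hW0⟩
      rw [hV0, hW0] at hsum
      simpa using hsum
    intro u v w u' v' w' hu hv hv2 hw hu' hv' hv'2 hw' heq
    have hsum : (u - u') + (v - v') + (w - w') = 0 := by
      linear_combination (norm := abel) heq
    have hU : τ (u - u') = u - u' := by simp [map_sub, hu, hu']
    have hV : τ (v - v') = -(v - v') := by
      simp only [map_sub, hv2, hv'2]; abel
    obtain ⟨h1, h2, h3⟩ := aux (u - u') (v - v') (w - w') hU
      (Submodule.sub_mem h hv hv') hV (Submodule.sub_mem n hw hw') hsum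
    exact ⟨sub_eq_zero.mp h1, sub_eq_zero.mp h2, sub_eq_zero.mp h3⟩
end
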